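/- arXiv:1809.05261 — 5 statements merged into one kernel-verified Lean document; each statement's English description precedes it below -/
import Mathlib

section
/- An R-module F is flat if and only if the character module F^+ = Hom_R(F, J) is injective, where J is an injective cogenerator of R-Mod (Lambek's theorem, in the internal-hom formulation). -/
open TensorProduct LinearMap

section Defs
variable (R : Type) [CommRing R]

/-- `f, g` form a short exact sequence `0 → A → B → C → 0`. -/
def ShortExactSeq {A B C : Type} [AddCommGroup A] [AddCommGroup B] [AddCommGroup C]
    [Module R A] [Module R B] [Module R C] (f : A →ₗ[R] B) (g : B →ₗ[R] C) : Prop :=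
  Function.Injective f ∧ Function.Exact f g ∧ Function.Surjective g

/-- The short exact sequence stays exact after tensoring with any module: purity. -/
def IsPureSeq {A B C : Type} [AddCommGroup A] [AddCommGroup B] [AddCommGroup C]
    [Module R A] [Module R B] [Module R C] (f : A →ₗ[R] B) (g : B →ₗ[R] C) : Prop :=
  ∀ (M : Type) [AddCommGroup M] [Module R M],
    ShortExactSeq R (f.lTensor M) (g.lTensor M)

/-- Pure injectivity: maps into `E` extend along pure monomorphisms. -/
def IsPureInjective (E : Type) [AddCommGroup E] [Module R E] : Prop :=
  ∀ (A B C : Type) [AddCommGroup A] [AddCommGroup B] [AddCommGroup C]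
    [Module R A] [Module R B] [Module R C] (f : A →ₗ[R] B) (g : B →ₗ[R] C),
    ShortExactSeq R f g → IsPureSeq R f g →
    ∀ h : A →ₗ[R] E, ∃ h' : B →ₗ[R] E, h'.comp f = h

/-- `J` is an injective cogenerator: it is injective and `Hom(-, J)` is faithful. -/
def IsInjectiveCogenerator (J : Type) [AddCommGroup J] [Module R J] : Prop :=
  Module.Injective R J ∧
  ∀ (M : Type) [AddCommGroup M] [Module R M], (∀ φ : M →ₗ[R] J, φ = 0) → Subsingleton M

/-- The canonical evaluation map `λ_F : F → Hom(Hom(F, J), J)`, `x ↦ (φ ↦ φ x)`. -/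
noncomputable def lamMap (J : Type) [AddCommGroup J] [Module R J]
    (F : Type) [AddCommGroup F] [Module R F] : F →ₗ[R] ((F →ₗ[R] J) →ₗ[R] J) :=
  LinearMap.applyₗ

end Defs


/-!
Currying identifies `Hom(B ⊗ F, J)` with `Hom(B, Hom(F, J))` naturally in `B`. For an injective
`J`, `Hom(-, J)` turns monomorphisms into epimorphisms, and for a cogenerator the converse holds.
Hence `f ⊗ F` is injective iff `Hom(f, F⁺)` is surjective, and quantifying over all injective `f`
turns flatness of `F` into injectivity of `F⁺`.
-/

universe u v

lemma Module.injective_iff_surjective_lcomp {R : Type u} [CommRing R] (Q : Type v)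
    [AddCommGroup Q] [Module R Q] :
    Module.Injective R Q ↔ ∀ ⦃X Y : Type v⦄ [AddCommGroup X] [AddCommGroup Y] [Module R X]
      [Module R Y] (f : X →ₗ[R] Y), Function.Injective f → Function.Surjective (f.lcomp R Q) := by
  refine ⟨fun hQ X Y _ _ _ _ f hf g ↦ ?_, fun h ↦ ⟨fun X Y _ _ _ _ f hf g ↦ ?_⟩⟩
  · obtain ⟨g', hg'⟩ := hQ.out f hf g
    exact ⟨g', LinearMap.ext hg'⟩
  · obtain ⟨g', hg'⟩ := h f hf g
    exact ⟨g', LinearMap.congr_fun hg'⟩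

section Lambek

variable {R : Type} [CommRing R] {J : Type} [AddCommGroup J] [Module R J]
  {A B : Type} [AddCommGroup A] [AddCommGroup B] [Module R A] [Module R B]

namespace IsInjectiveCogenerator

/-- Every `φ : ker f → J` extends to `A` and then factors through `f`, so it vanishes. -/
lemma injective_of_surjective_lcomp (hJ : IsInjectiveCogenerator R J) (f : A →ₗ[R] B)
    (hf : Function.Surjective (f.lcomp R J)) : Function.Injective f := by
  have hker : Subsingleton (ker f) := by
    refine hJ.2 _ fun φ ↦ ?_
    obtain ⟨φ', hφ'⟩ := hJ.1.out (ker f).subtype Subtype.val_injective φ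
    obtain ⟨ψ, rfl⟩ := hf φ'
    ext x
    rw [← hφ' x]
    simp [mem_ker.mp x.2]
  rw [← ker_eq_bot]
  exact Submodule.eq_bot_of_subsingleton

lemma surjective_lcomp_iff_injective (hJ : IsInjectiveCogenerator R J) (f : A →ₗ[R] B) :
    Function.Surjective (f.lcomp R J) ↔ Function.Injective f :=
  ⟨hJ.injective_of_surjective_lcomp f,
    fun hf ↦ (Module.injective_iff_surjective_lcomp J).mp hJ.1 f hf⟩

end IsInjectiveCogenerator

lemma lift_equiv_comp_lcomp (F : Type) [AddCommGroup F] [Module R F] (f : A →ₗ[R] B) :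
    (lift.equiv (RingHom.id R) A F J).toLinearMap ∘ₗ f.lcomp R (F →ₗ[R] J)
      = (f.rTensor F).lcomp R J ∘ₗ (lift.equiv (RingHom.id R) B F J).toLinearMap := by
  ext g a x
  simp [lift.equiv]

lemma IsInjectiveCogenerator.injective_rTensor_iff_surjective_lcomp
    (hJ : IsInjectiveCogenerator R J) (F : Type) [AddCommGroup F] [Module R F]
    (f : A →ₗ[R] B) :
    Function.Injective (f.rTensor F) ↔ Function.Surjective (f.lcomp R (F →ₗ[R] J)) := by
  have hcomp := congrArg DFunLike.coe (lift_equiv_comp_lcomp (J := J) F f)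
  simp only [coe_comp, LinearEquiv.coe_coe] at hcomp
  rw [← hJ.surjective_lcomp_iff_injective, ← EquivLike.comp_surjective _ (lift.equiv _ A F J),
    hcomp, EquivLike.surjective_comp]

end Lambek

/-- Lambek: `F` is flat iff `F⁺ = Hom_R(F, J)` is injective,
for `J` an injective cogenerator. -/
theorem stmt2 (R : Type) [CommRing R] (J : Type) [AddCommGroup J] [Module R J]
    (hJ : IsInjectiveCogenerator R J)
    (F : Type) [AddCommGroup F] [Module R F] :
    Module.Flat R F ↔ Module.Injective R (F →ₗ[R] J) := by
  rw [Module.Flat.iff_rTensor_preserves_injective_linearMap,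
    Module.injective_iff_surjective_lcomp]
  simp only [hJ.injective_rTensor_iff_surjective_lcomp F]
end

section
/- For any R-module F, the canonical evaluation map λ_F : F → F^{++} = Hom_R(Hom_R(F, J), J) is a pure monomorphism: it is injective and the short exact sequence 0 → F → F^{++} → F^{++}/F → 0 is pure. -/
open TensorProduct LinearMap

section Aux
variable (R : Type) [CommRing R] (J : Type) [AddCommGroup J] [Module R J]

/-- A cogenerator separates points. -/
lemma sep_points (hJ : IsInjectiveCogenerator R J)
    (M : Type) [AddCommGroup M] [Module R M] (x : M)
    (h : ∀ φ : M →ₗ[R] J, φ x = 0) : x = 0 := by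
  set N := Submodule.span R ({x} : Set M) with hN
  have hx : x ∈ N := Submodule.mem_span_singleton_self x
  have hsub : Subsingleton N := by
    apply hJ.2 N
    intro φ
    obtain ⟨φ', hφ'⟩ := hJ.1.out N.subtype N.injective_subtype φ
    ext ⟨y, hy⟩
    obtain ⟨r, rfl⟩ := Submodule.mem_span_singleton.mp hy
    have h1 : φ' x = 0 := h φ'
    have h2 := hφ' ⟨r • x, hy⟩
    simp only [Submodule.coe_subtype] at h2
    rw [LinearMap.zero_apply, ← h2, map_smul, h1, smul_zero]
  have : (⟨x, hx⟩ : N) = ⟨0, N.zero_mem⟩ := Subsingleton.elim _ _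
  exact congrArg Subtype.val this

lemma lTensor_lam_inj (hJ : IsInjectiveCogenerator R J)
    (F : Type) [AddCommGroup F] [Module R F]
    (M : Type) [AddCommGroup M] [Module R M] :
    Function.Injective ((lamMap R J F).lTensor M) := by
  rw [← LinearMap.ker_eq_bot, LinearMap.ker_eq_bot']
  intro x hx
  apply sep_points R J hJ
  intro φ
  set ψ : M →ₗ[R] (F →ₗ[R] J) := TensorProduct.curry φ with hψ
  set Φ : M ⊗[R] ((F →ₗ[R] J) →ₗ[R] J) →ₗ[R] J :=
    TensorProduct.lift (LinearMap.applyₗ.comp ψ) with hΦ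
  have key : Φ.comp ((lamMap R J F).lTensor M) = φ := by
    apply TensorProduct.ext'
    intro m f
    simp [Φ, ψ, lamMap]
  calc φ x = Φ (((lamMap R J F).lTensor M) x) := by rw [← key]; rfl
    _ = 0 := by rw [hx, map_zero]

end Aux



/-- the evaluation map `λ_F : F → F⁺⁺` is a pure monomorphism:
it is injective and `0 → F → F⁺⁺ → F⁺⁺/F → 0` is a pure short exact sequence. -/
theorem stmt4 (R : Type) [CommRing R] (J : Type) [AddCommGroup J] [Module R J]
    (hJ : IsInjectiveCogenerator R J)
    (F : Type) [AddCommGroup F] [Module R F] :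
    Function.Injective (lamMap R J F) ∧
    ShortExactSeq R (lamMap R J F) (LinearMap.range (lamMap R J F)).mkQ ∧
    IsPureSeq R (lamMap R J F) (LinearMap.range (lamMap R J F)).mkQ := by
  have hinj : Function.Injective (lamMap R J F) := by
    intro a b hab
    have h0 : a - b = 0 := by
      apply sep_points R J hJ
      intro φ
      have h1 : lamMap R J F a φ = lamMap R J F b φ := by rw [hab]
      simp only [lamMap, LinearMap.applyₗ_apply_apply] at h1
      simp [map_sub, h1]
    exact sub_eq_zero.mp h0
  have hexact : Function.Exact (lamMap R J F)
      (LinearMap.range (lamMap R J F)).mkQ := by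
    rw [LinearMap.exact_iff, Submodule.ker_mkQ]
  have hsurj := Submodule.mkQ_surjective (LinearMap.range (lamMap R J F))
  refine ⟨hinj, ⟨hinj, hexact, hsurj⟩, ?_⟩
  intro M _ _
  exact ⟨lTensor_lam_inj R J hJ F M, lTensor_exact M hexact hsurj,
    LinearMap.lTensor_surjective M hsurj⟩
end

section
/- A bounded (or unbounded) cochain complex F of R-modules is a flat complex (i.e., F is exact and all kernels ker ∂^n are flat modules) if and only if the dual complex F^+ = Hom_R(F, J) is an exact complex of injective modules with injective cycle modules, where J is an injective cogenerator. -/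
open TensorProduct LinearMap

/-!
Because `J` is injective, `Hom(-, J)` is exact; because it is moreover a cogenerator, `Hom(-, J)`
also reflects exactness, and by the tensor–hom adjunction `Hom(M, J)` is injective exactly when `M`
is flat. For an exact complex, the cycles `ker ∂ⁿ⁺¹` of `F⁺` (maps `Fⁿ⁺¹ → J` killing `im ∂ⁿ`) are
`Hom(Fⁿ⁺¹ / im ∂ⁿ, J) ≅ Hom(im ∂ⁿ⁺¹, J) = Hom(ker ∂ⁿ⁺², J)`, which turns flatness of the cycles of
`F` into injectivity of the cycles of `F⁺` and back. Finally `Hom(Fⁿ, J)` is an extension of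
`Hom(ker ∂ⁿ, J)` by `Hom(im ∂ⁿ, J)`; both are injective, so the extension splits and is injective.
-/

section Injective

universe u

variable {R : Type*} [Ring R] {M N : Type u} [AddCommGroup M] [AddCommGroup N]
  [Module R M] [Module R N]

theorem Module.Injective.of_linearEquiv [Module.Injective R M] (e : M ≃ₗ[R] N) :
    Module.Injective R N where
  out X Y _ _ _ _ f hf g := by
    obtain ⟨h, hh⟩ := Module.Injective.out f hf (e.symm.toLinearMap ∘ₗ g)
    exact ⟨e.toLinearMap ∘ₗ h, fun x => by simp [hh x]⟩

instance Module.Injective.prod [Module.Injective R M] [Module.Injective R N] :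
    Module.Injective R (M × N) where
  out X Y _ _ _ _ f hf g := by
    obtain ⟨h₁, hh₁⟩ := Module.Injective.out f hf (LinearMap.fst R M N ∘ₗ g)
    obtain ⟨h₂, hh₂⟩ := Module.Injective.out f hf (LinearMap.snd R M N ∘ₗ g)
    exact ⟨h₁.prod h₂, fun x => Prod.ext (hh₁ x) (hh₂ x)⟩

theorem Module.Injective.of_exact {A B C : Type u} [AddCommGroup A] [AddCommGroup B]
    [AddCommGroup C] [Module R A] [Module R B] [Module R C] [Module.Injective R A]
    [Module.Injective R C] {f : A →ₗ[R] B} {g : B →ₗ[R] C} (hf : Function.Injective f)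
    (hfg : Function.Exact f g) (hg : Function.Surjective g) : Module.Injective R B := by
  obtain ⟨l, hl⟩ := Module.Injective.out f hf LinearMap.id
  exact .of_linearEquiv (hfg.splitInjectiveEquiv hg ⟨l, LinearMap.ext hl⟩).1.symm

end Injective

namespace LinearMap

variable {R : Type} [CommRing R] {J : Type} [AddCommGroup J] [Module R J]
  {A B C : Type} [AddCommGroup A] [AddCommGroup B] [AddCommGroup C]
  [Module R A] [Module R B] [Module R C]

theorem lcomp_surjective_of_injective [Module.Injective R J] {f : A →ₗ[R] B}
    (hf : Function.Injective f) : Function.Surjective (lcomp R J f) := fun φ =>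
  have ⟨ψ, hψ⟩ := Module.Injective.out f hf φ
  ⟨ψ, LinearMap.ext hψ⟩

theorem exact_rangeRestrict_of_exact {f : A →ₗ[R] B} {g : B →ₗ[R] C}
    (hfg : Function.Exact f g) : Function.Exact f g.rangeRestrict :=
  (range g).injective_subtype.comp_exact_iff_exact.mp hfg

theorem exact_lcomp_rangeRestrict_of_exact {f : A →ₗ[R] B} {g : B →ₗ[R] C}
    (hfg : Function.Exact f g) : Function.Exact (lcomp R J g.rangeRestrict) (lcomp R J f) :=
  exact_lcomp_of_exact_of_surjective J (exact_rangeRestrict_of_exact hfg)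
    g.surjective_rangeRestrict

theorem exact_lcomp_of_exact [Module.Injective R J] {f : A →ₗ[R] B} {g : B →ₗ[R] C}
    (hfg : Function.Exact f g) : Function.Exact (lcomp R J g) (lcomp R J f) := by
  have hg : lcomp R J g = lcomp R J g.rangeRestrict ∘ₗ lcomp R J (range g).subtype := rfl
  rw [hg, (lcomp_surjective_of_injective (range g).injective_subtype).comp_exact_iff_exact]
  exact exact_lcomp_rangeRestrict_of_exact hfg

noncomputable def kerLcompEquivOfExact (J : Type) [AddCommGroup J] [Module R J]
    {f : A →ₗ[R] B} {g : B →ₗ[R] C} (hfg : Function.Exact f g) :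
    ker (lcomp R J f) ≃ₗ[R] (range g →ₗ[R] J) :=
  (LinearEquiv.ofEq _ _ (exact_lcomp_rangeRestrict_of_exact hfg).linearMap_ker_eq).trans
    (LinearEquiv.ofInjective _ (lcomp_injective_of_surjective _ g.surjective_rangeRestrict)).symm

theorem injective_of_surjective_lcomp (hJ : IsInjectiveCogenerator R J) {f : A →ₗ[R] B}
    (hf : Function.Surjective (lcomp R J f)) : Function.Injective f := by
  have := hJ.1
  rw [← ker_eq_bot, ← Submodule.subsingleton_iff_eq_bot]
  refine hJ.2 _ fun φ => ?_
  obtain ⟨φ', hφ'⟩ := Module.Injective.out (R := R) (ker f).subtype (ker f).injective_subtype φ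
  obtain ⟨ψ, hψ⟩ := hf φ'
  ext ⟨x, hx⟩
  rw [← hφ', ← hψ]
  simp [mem_ker.mp hx]

theorem surjective_of_injective_lcomp (hJ : IsInjectiveCogenerator R J) {f : A →ₗ[R] B}
    (hf : Function.Injective (lcomp R J f)) : Function.Surjective f := by
  rw [← range_eq_top, ← Submodule.Quotient.subsingleton_iff]
  refine hJ.2 _ fun φ => ?_
  have hφf : lcomp R J f (φ ∘ₗ (range f).mkQ) = 0 := by
    ext x
    simp [(Submodule.Quotient.mk_eq_zero _).mpr (mem_range_self f x)]
  rw [← cancel_right (range f).mkQ_surjective, zero_comp]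
  exact hf (hφf.trans (map_zero _).symm)

theorem exact_of_exact_lcomp (hJ : IsInjectiveCogenerator R J) {f : A →ₗ[R] B} {g : B →ₗ[R] C}
    (hgf : g ∘ₗ f = 0) (hfg : Function.Exact (lcomp R J g) (lcomp R J f)) :
    Function.Exact f g := by
  have := hJ.1
  have hfker (a : A) : f a ∈ ker g := congr($hgf a)
  have hsurj : Function.Surjective (f.codRestrict (ker g) hfker) := by
    refine surjective_of_injective_lcomp hJ ((injective_iff_map_eq_zero _).mpr fun φ hφ => ?_)
    obtain ⟨ψ, hψ⟩ := Module.Injective.out (R := R) (ker g).subtype (ker g).injective_subtype φ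
    have hψf : lcomp R J f ψ = 0 := by
      ext a
      simpa [← hψ] using congr($hφ a)
    obtain ⟨σ, rfl⟩ := (hfg ψ).mp hψf
    ext ⟨x, hx⟩
    simp [← hψ, mem_ker.mp hx]
  refine exact_of_comp_of_mem_range hgf fun x hx => ?_
  obtain ⟨a, ha⟩ := hsurj ⟨x, hx⟩
  exact ⟨a, congr($ha.1)⟩

end LinearMap

namespace Module

variable {R : Type} [CommRing R] {J : Type} [AddCommGroup J] [Module R J]
  {A B C M : Type} [AddCommGroup A] [AddCommGroup B] [AddCommGroup C]
  [Module R A] [Module R B] [Module R C] [AddCommGroup M] [Module R M]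

theorem injective_linearMap_of_flat [Module.Injective R J] [Module.Flat R M] :
    Module.Injective R (M →ₗ[R] J) where
  out X Y _ _ _ _ f hf g := by
    obtain ⟨h, hh⟩ := Module.Injective.out (f.rTensor M)
      (Module.Flat.rTensor_preserves_injective_linearMap f hf) (TensorProduct.lift g)
    exact ⟨TensorProduct.curry h, fun a => LinearMap.ext fun m => by simpa using hh (a ⊗ₜ m)⟩

theorem flat_of_injective_linearMap (hJ : IsInjectiveCogenerator R J)
    [Module.Injective R (M →ₗ[R] J)] : Module.Flat R M := by
  rw [Module.Flat.iff_rTensor_preserves_injective_linearMap]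
  intro N N' _ _ _ _ f hf
  refine injective_of_surjective_lcomp hJ fun φ => ?_
  obtain ⟨ψ, hψ⟩ := Module.Injective.out f hf (TensorProduct.curry φ)
  exact ⟨TensorProduct.lift ψ, TensorProduct.ext' fun n m => by simp [hψ n]⟩

theorem injective_linearMap_of_exact_of_flat [Module.Injective R J] [Module.Flat R A]
    [Module.Flat R C] {f : A →ₗ[R] B} {g : B →ₗ[R] C} (hf : Function.Injective f)
    (hfg : Function.Exact f g) (hg : Function.Surjective g) :
    Module.Injective R (B →ₗ[R] J) :=
  have := injective_linearMap_of_flat (R := R) (J := J) (M := A)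
  have := injective_linearMap_of_flat (R := R) (J := J) (M := C)
  .of_exact (lcomp_injective_of_surjective _ hg) (exact_lcomp_of_exact hfg)
    (lcomp_surjective_of_injective hf)

end Module

/-- a cochain complex `F` is flat (exact with flat kernels) iff its dual
`F⁺` is an exact complex of injective modules with injective cycle modules. -/
theorem stmt9 (R : Type) [CommRing R] (J : Type) [AddCommGroup J] [Module R J]
    (hJ : IsInjectiveCogenerator R J)
    (X : ℤ → Type) [∀ n, AddCommGroup (X n)] [∀ n, Module R (X n)]
    (d : ∀ n : ℤ, X n →ₗ[R] X (n + 1))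
    (hdd : ∀ n : ℤ, (d (n + 1)).comp (d n) = 0) :
    ((∀ n : ℤ, Function.Exact (d n) (d (n + 1))) ∧
      (∀ n : ℤ, Module.Flat R (LinearMap.ker (d n)))) ↔
    ((∀ n : ℤ, Function.Exact (LinearMap.lcomp R J (d (n + 1))) (LinearMap.lcomp R J (d n))) ∧
      (∀ n : ℤ, Module.Injective R (X n →ₗ[R] J)) ∧
      (∀ n : ℤ, Module.Injective R (LinearMap.ker (LinearMap.lcomp R J (d n))))) := by
  have := hJ.1
  constructor
  · rintro ⟨hex, hflat⟩
    have hflatRange (n : ℤ) : Module.Flat R (range (d n)) :=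
      (hex n).linearMap_ker_eq ▸ hflat (n + 1)
    refine ⟨fun n => exact_lcomp_of_exact (hex n), fun n => ?_, fun n => ?_⟩
    · exact Module.injective_linearMap_of_exact_of_flat (ker (d n)).injective_subtype
        (exact_rangeRestrict_of_exact (exact_subtype_ker_map _)) (d n).surjective_rangeRestrict
    · have := Module.injective_linearMap_of_flat (R := R) (J := J) (M := range (d (n + 1)))
      exact .of_linearEquiv (kerLcompEquivOfExact J (hex n)).symm
  · rintro ⟨hdex, -, hinjKer⟩
    have hex (n : ℤ) := exact_of_exact_lcomp hJ (hdd n) (hdex n)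
    refine ⟨hex, fun n => ?_⟩
    obtain ⟨m, rfl⟩ : ∃ m : ℤ, m + 1 + 1 = n := ⟨n - 2, by ring⟩
    have := hinjKer m
    have := Module.Injective.of_linearEquiv (kerLcompEquivOfExact J (hex m))
    rw [(hex (m + 1)).linearMap_ker_eq]
    exact Module.flat_of_injective_linearMap hJ
end

section
/- If 0 → K → G → F → 0 is a short exact sequence of R-modules with F flat, and 0 → K^+ → Q → F → 0 is the pullback of 0 → K^+ → G^+ → F^{++} → 0 along λ_F : F → F^{++}, then this pullback sequence is pure and hence splits (since K^+ is pure injective). -/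
open TensorProduct LinearMap

/-- Lambek's lemma: if `F` is flat and `J` injective, then `Hom(F, J)` is injective. -/
lemma aux_lambek (R : Type) [CommRing R] (J : Type) [AddCommGroup J] [Module R J]
    (hJ : Module.Injective R J) (F : Type) [AddCommGroup F] [Module R F]
    [Module.Flat R F] : Module.Injective R (F →ₗ[R] J) := by
  apply Module.Baer.injective
  intro I g
  have hinj : Function.Injective ((Submodule.subtype I).rTensor F) :=
    Module.Flat.rTensor_preserves_injective_linearMap _ I.injective_subtype
  obtain ⟨H, hH⟩ := hJ.out _ hinj (TensorProduct.lift g)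
  refine ⟨TensorProduct.curry H, fun x mem => ?_⟩
  ext y
  have := hH (⟨x, mem⟩ ⊗ₜ[R] y)
  simpa [TensorProduct.curry_apply] using this

/-- given a short exact sequence `0 → K → G → F → 0` with `F` flat and a
short exact sequence `0 → K⁺ → G⁺ → F⁺⁺ → 0`, the pullback sequence
`0 → K⁺ → Q → F → 0` along `λ_F` is pure and splits. -/
theorem stmt11 (R : Type) [CommRing R] (J : Type) [AddCommGroup J] [Module R J]
    (hJ : IsInjectiveCogenerator R J)
    (K G F : Type) [AddCommGroup K] [AddCommGroup G] [AddCommGroup F]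
    [Module R K] [Module R G] [Module R F]
    (f : K →ₗ[R] G) (g : G →ₗ[R] F) (hfg : ShortExactSeq R f g)
    (hF : Module.Flat R F)
    (u : (K →ₗ[R] J) →ₗ[R] (G →ₗ[R] J))
    (v : (G →ₗ[R] J) →ₗ[R] ((F →ₗ[R] J) →ₗ[R] J))
    (huv : ShortExactSeq R u v)
    -- `Q` is the pullback of `v` along `λ_F`, with structure maps `k` and `t`
    (Q : Submodule R ((G →ₗ[R] J) × F))
    (hQ : Q = LinearMap.ker (v.comp (LinearMap.fst R (G →ₗ[R] J) F) -
      (lamMap R J F).comp (LinearMap.snd R (G →ₗ[R] J) F)))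
    (k : (K →ₗ[R] J) →ₗ[R] Q) (t : Q →ₗ[R] F)
    (hk : ∀ x : K →ₗ[R] J, (k x : (G →ₗ[R] J) × F) = (u x, 0))
    (ht : ∀ q : Q, t q = (q : (G →ₗ[R] J) × F).2) :
    ShortExactSeq R k t ∧ IsPureSeq R k t ∧
      ∃ s : F →ₗ[R] Q, t.comp s = LinearMap.id := by
  classical
  haveI : Module.Flat R F := hF
  -- Part (a): short exact sequence
  have hki : Function.Injective k := by
    intro a b hab
    apply huv.1
    have h1 := congrArg Subtype.val hab
    rw [hk, hk] at h1
    exact (Prod.ext_iff.mp h1).1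
  have htk : ∀ ψ, t (k ψ) = 0 := fun ψ => by rw [ht, hk]
  have hke : Function.Exact k t := by
    rintro ⟨⟨α, x⟩, hmem⟩
    rw [ht]
    constructor
    · intro h2
      dsimp only at h2
      rw [hQ] at hmem
      have h3 : v α - lamMap R J F x = 0 := hmem
      rw [h2, map_zero, sub_zero] at h3
      obtain ⟨ψ, hψ⟩ := (huv.2.1 α).mp h3
      refine ⟨ψ, Subtype.ext ?_⟩
      rw [hk]
      exact Prod.ext hψ h2.symm
    · rintro ⟨ψ, hψ⟩
      have := congrArg Subtype.val hψ
      rw [hk] at this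
      exact (Prod.ext_iff.mp this).2.symm
  have hks : Function.Surjective t := by
    intro x
    obtain ⟨α, hα⟩ := huv.2.2 (lamMap R J F x)
    have hmem : (α, x) ∈ Q := by
      rw [hQ]
      show v α - lamMap R J F x = 0
      rw [hα, sub_self]
    exact ⟨⟨(α, x), hmem⟩, by rw [ht]⟩
  have hSES : ShortExactSeq R k t := ⟨hki, hke, hks⟩
  -- the dual sequence
  let kplus : (Q →ₗ[R] J) →ₗ[R] ((K →ₗ[R] J) →ₗ[R] J) := LinearMap.lcomp R J k
  let tplus : (F →ₗ[R] J) →ₗ[R] (Q →ₗ[R] J) := LinearMap.lcomp R J t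
  have hkplus_surj : Function.Surjective kplus := by
    intro ψ
    obtain ⟨h', hh'⟩ := hJ.1.out k hki ψ
    exact ⟨h', LinearMap.ext hh'⟩
  have htplus_inj : Function.Injective tplus := by
    intro a b hab
    ext x
    obtain ⟨q, rfl⟩ := hks x
    exact LinearMap.congr_fun hab q
  have hdual_exact : Function.Exact tplus kplus := by
    intro y
    constructor
    · intro hy
      have hker : LinearMap.ker t ≤ LinearMap.ker y := by
        intro q hq
        obtain ⟨ψ, rfl⟩ := (hke q).mp hq
        exact LinearMap.congr_fun hy ψ
      let e := t.quotKerEquivOfSurjective hks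
      refine ⟨((LinearMap.ker t).liftQ y hker).comp (e.symm : F →ₗ[R] Q ⧸ LinearMap.ker t), ?_⟩
      ext q
      have he : e (Submodule.Quotient.mk q) = t q := by
        simp [e, LinearMap.quotKerEquivOfSurjective, LinearMap.quotKerEquivRange_apply_mk]
      have hsymm : e.symm (t q) = Submodule.Quotient.mk q := by
        apply e.injective
        rw [LinearEquiv.apply_symm_apply, he]
      show ((LinearMap.ker t).liftQ y hker) (e.symm (t q)) = y q
      rw [hsymm, Submodule.liftQ_apply]
    · rintro ⟨x, rfl⟩
      ext ψ
      show x (t (k ψ)) = 0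
      rw [htk, map_zero]
  -- retraction of tplus from injectivity of F⁺ (Lambek)
  have hFJ : Module.Injective R (F →ₗ[R] J) := aux_lambek R J hJ.1 F
  obtain ⟨π, hπ⟩ := hFJ.out tplus htplus_inj LinearMap.id
  have hret : ∃ l, l ∘ₗ tplus = LinearMap.id := ⟨π, LinearMap.ext hπ⟩
  obtain ⟨r, hrr⟩ : ∃ r, kplus ∘ₗ r = LinearMap.id :=
    ((hdual_exact.split_tfae htplus_inj hkplus_surj).out 1 0).mp hret
  -- Part (b): purity
  have hpure : IsPureSeq R k t := by
    intro M _ _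
    have hz0 : ∀ z : M ⊗[R] (K →ₗ[R] J), k.lTensor M z = 0 → z = 0 := by
      intro z hz
      have hφ : ∀ φ : M ⊗[R] (K →ₗ[R] J) →ₗ[R] J, φ z = 0 := by
        intro φ
        let Ψ : M ⊗[R] Q →ₗ[R] J := TensorProduct.lift (r ∘ₗ TensorProduct.curry φ)
        have hΨ : Ψ ∘ₗ k.lTensor M = φ := by
          apply TensorProduct.ext'
          intro m a
          have h4 : kplus (r (TensorProduct.curry φ m)) = TensorProduct.curry φ m :=
            LinearMap.congr_fun hrr (TensorProduct.curry φ m)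
          have h5 := LinearMap.congr_fun h4 a
          simp only [LinearMap.comp_apply, LinearMap.lTensor_tmul, Ψ, TensorProduct.lift.tmul,
            LinearMap.comp_apply]
          rw [show (kplus (r (TensorProduct.curry φ m))) a
              = (r (TensorProduct.curry φ m)) (k a) from rfl] at h5
          rw [h5, TensorProduct.curry_apply]
        calc φ z = Ψ (k.lTensor M z) := by rw [← hΨ]; rfl
        _ = 0 := by rw [hz, map_zero]
      have hallχ : ∀ χ : (Submodule.span R {z} : Submodule R _) →ₗ[R] J, χ = 0 := by
        intro χ
        obtain ⟨χ', hχ'⟩ := hJ.1.out (Submodule.span R {z}).subtype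
          (Submodule.span R {z}).injective_subtype χ
        ext ⟨s, hs⟩
        obtain ⟨c, rfl⟩ := Submodule.mem_span_singleton.mp hs
        have h1 : χ' ((Submodule.span R {z}).subtype ⟨c • z, hs⟩) = χ ⟨c • z, hs⟩ := hχ' _
        show χ ⟨c • z, hs⟩ = 0
        rw [← h1]
        show χ' (c • z) = 0
        rw [map_smul, hφ χ', smul_zero]
      haveI hsub : Subsingleton (Submodule.span R {z} : Submodule R _) := hJ.2 _ hallχ
      have hz' : (⟨z, Submodule.mem_span_singleton_self z⟩ :
          (Submodule.span R {z} : Submodule R _)) = ⟨0, (Submodule.span R {z}).zero_mem⟩ :=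
        Subsingleton.elim _ _
      exact congrArg Subtype.val hz'
    refine ⟨?_, lTensor_exact M hke hks, LinearMap.lTensor_surjective M hks⟩
    intro a b hab
    have : k.lTensor M (a - b) = 0 := by rw [map_sub, hab, sub_self]
    exact sub_eq_zero.mp (hz0 _ this)
  -- Part (c): splitting
  have hinjK : Function.Injective (k.lTensor K) := (hpure K).1
  obtain ⟨E, hE⟩ := hJ.1.out (k.lTensor K) hinjK (TensorProduct.lift (lamMap R J K))
  have hp : (TensorProduct.curry E).flip ∘ₗ k = LinearMap.id := by
    ext ψ x
    have h6 := hE (x ⊗ₜ[R] ψ)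
    rw [LinearMap.lTensor_tmul] at h6
    simpa [TensorProduct.curry_apply, lamMap] using h6
  have hret2 : ∃ l, l ∘ₗ k = LinearMap.id := ⟨(TensorProduct.curry E).flip, hp⟩
  obtain ⟨s, hs⟩ : ∃ s, t ∘ₗ s = LinearMap.id :=
    ((hke.split_tfae hki hks).out 1 0).mp hret2
  exact ⟨hSES, hpure, s, hs⟩
end

section
/- The category of cochain complexes of R-modules has enough pure injective objects: every complex X admits a pure monomorphism into a pure injective complex, given by the canonical map X → X^{++} with respect to degreewise dualization by an injective cogenerator J. -/
open TensorProduct LinearMap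

section Complexes

variable (R : Type) [CommRing R]

/-- A cochain complex of `R`-modules (differential raising degree). -/
structure Cx where
  X : ℤ → Type
  [acg : ∀ n, AddCommGroup (X n)]
  [mod : ∀ n, Module R (X n)]
  d : ∀ n : ℤ, X n →ₗ[R] X (n + 1)
  dd : ∀ n : ℤ, (d (n + 1)).comp (d n) = 0

/-- A chain complex of `R`-modules (differential lowering degree). -/
structure DCx where
  X : ℤ → Type
  [acg : ∀ n, AddCommGroup (X n)]
  [mod : ∀ n, Module R (X n)]
  d : ∀ n : ℤ, X (n + 1) →ₗ[R] X n
  dd : ∀ n : ℤ, (d n).comp (d (n + 1)) = 0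

attribute [instance] Cx.acg Cx.mod DCx.acg DCx.mod

variable {R}

/-- Morphisms of cochain complexes. -/
@[ext] structure CxHom (A B : Cx R) where
  f : ∀ n : ℤ, A.X n →ₗ[R] B.X n
  comm : ∀ n : ℤ, (B.d n).comp (f n) = (f (n + 1)).comp (A.d n)

/-- Morphisms of chain complexes. -/
@[ext] structure DCxHom (A B : DCx R) where
  f : ∀ n : ℤ, A.X n →ₗ[R] B.X n
  comm : ∀ n : ℤ, (B.d n).comp (f (n + 1)) = (f n).comp (A.d n)

variable (J : Type) [AddCommGroup J] [Module R J]

/-- The degreewise dual of a cochain complex is a chain complex. -/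
noncomputable def Cx.dual (A : Cx R) : DCx R where
  X n := A.X n →ₗ[R] J
  d n := LinearMap.lcomp R J (A.d n)
  dd n := by
    ext φ x
    have h := LinearMap.congr_fun (A.dd n) x
    simp only [LinearMap.comp_apply, LinearMap.zero_apply] at h ⊢
    simp [LinearMap.lcomp_apply, h]

/-- The degreewise dual of a chain complex is a cochain complex. -/
noncomputable def DCx.dual (E : DCx R) : Cx R where
  X n := E.X n →ₗ[R] J
  d n := LinearMap.lcomp R J (E.d n)
  dd n := by
    ext φ x
    have h := LinearMap.congr_fun (E.dd n) x
    simp only [LinearMap.comp_apply, LinearMap.zero_apply] at h ⊢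
    simp [LinearMap.lcomp_apply, h]

/-- The double dual of a cochain complex. -/
noncomputable def Cx.ddual (A : Cx R) : Cx R := (A.dual J).dual J

/-- The dual of a morphism of cochain complexes. -/
noncomputable def CxHom.dual {A B : Cx R} (h : CxHom A B) :
    DCxHom (B.dual J) (A.dual J) where
  f n := LinearMap.lcomp R J (h.f n)
  comm n := by
    refine LinearMap.ext fun φ => LinearMap.ext fun x => ?_
    have hc := LinearMap.congr_fun (h.comm n) x
    simp only [LinearMap.comp_apply] at hc
    simp only [LinearMap.comp_apply, Cx.dual, LinearMap.lcomp_apply]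
    exact congrArg (fun y => (show B.X (n + 1) →ₗ[R] J from φ) y) hc.symm

/-- The canonical evaluation chain map `X → X⁺⁺`. -/
noncomputable def lamCx (A : Cx R) : CxHom A (A.ddual J) where
  f n := lamMap R J (A.X n)
  comm n := by
    refine LinearMap.ext fun x => LinearMap.ext fun φ => rfl

/-- A degreewise short exact sequence of cochain complexes (a conflation). -/
def CxSES {A B C : Cx R} (u : CxHom A B) (v : CxHom B C) : Prop :=
  ∀ n : ℤ, ShortExactSeq R (u.f n) (v.f n)

/-- A conflation of complexes is pure if its degreewise dual splits (as complexes). -/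
noncomputable def CxPure {A B C : Cx R} (u : CxHom A B) (v : CxHom B C) : Prop :=
  ∃ r : DCxHom (B.dual J) (C.dual J),
    ∀ n : ℤ, (r.f n).comp ((v.dual J).f n) = LinearMap.id

/-- A complex `E` is pure injective if maps into it extend along pure conflations. -/
noncomputable def CxPureInjective (E : Cx R) : Prop :=
  ∀ (A B C : Cx R) (u : CxHom A B) (v : CxHom B C),
    CxSES u v → CxPure J u v →
    ∀ h : CxHom A E, ∃ h' : CxHom B E, ∀ n : ℤ, (h'.f n).comp (u.f n) = h.f n

end Complexes

/-!
The evaluation map `X → X⁺⁺` is degreewise injective because `J` cogenerates, and its dual is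
split by the evaluation map of `X⁺` (a triangle identity). For pure injectivity of `X⁺⁺ = (X⁺)⁺`,
maps `A → E⁺` into a dual complex correspond to chain maps `E → A⁺`, so it suffices that for a
pure conflation `A → B → C` the dual `B⁺ → A⁺` has a chain-map section `T`. Degreewise, if `r`
retracts `v⁺`, the projection `1 - v⁺ r` of `B⁺` kills `ker u⁺ = im v⁺` and so factors as
`T ∘ u⁺` (`u⁺` is onto since `J` is injective); `T` is a chain map because `1 - v⁺ r` is one and
`u⁺` is an epimorphism.
-/

section DualSection

variable {R : Type} [CommRing R] {J : Type} [AddCommGroup J] [Module R J]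

lemma lamMap_injective (hJ : IsInjectiveCogenerator R J)
    (F : Type) [AddCommGroup F] [Module R F] : Function.Injective (lamMap R J F) := by
  obtain ⟨hJinj, hcog⟩ := hJ
  refine (injective_iff_map_eq_zero _).2 fun x hx => ?_
  have hx' : ∀ φ : F →ₗ[R] J, φ x = 0 := fun φ => LinearMap.congr_fun hx φ
  have : Subsingleton (R ∙ x) := hcog _ fun ξ => by
    obtain ⟨φ, hφ⟩ := hJinj.out _ (R ∙ x).injective_subtype ξ
    ext ⟨m, hm⟩
    obtain ⟨c, rfl⟩ := Submodule.mem_span_singleton.mp hm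
    simp [← hφ, hx']
  simpa using congrArg Subtype.val
    (Subsingleton.elim (⟨x, Submodule.mem_span_singleton_self x⟩ : R ∙ x) 0)

variable {A B C : Type} [AddCommGroup A] [AddCommGroup B] [AddCommGroup C]
  [Module R A] [Module R B] [Module R C] {f : A →ₗ[R] B} {g : B →ₗ[R] C}

lemma lcomp_surjective_of_injective (hJ : Module.Injective R J) (hf : Function.Injective f) :
    Function.Surjective (lcomp R J f) := fun ψ =>
  let ⟨φ, hφ⟩ := hJ.out f hf ψ
  ⟨φ, LinearMap.ext hφ⟩

lemma ShortExactSeq.exists_dual_section (hJ : Module.Injective R J) (hfg : ShortExactSeq R f g)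
    (q : (B →ₗ[R] J) →ₗ[R] (C →ₗ[R] J)) (hq : q ∘ₗ lcomp R J g = LinearMap.id) :
    ∃ T : (A →ₗ[R] J) →ₗ[R] (B →ₗ[R] J),
      T ∘ₗ lcomp R J f = LinearMap.id - lcomp R J g ∘ₗ q ∧ lcomp R J f ∘ₗ T = LinearMap.id := by
  obtain ⟨hf, hexact, hg⟩ := hfg
  have hsurj := lcomp_surjective_of_injective hJ hf
  have hexact' := exact_lcomp_of_exact_of_surjective J hexact hg
  have hP : range (lcomp R J g) ≤ ker (LinearMap.id - lcomp R J g ∘ₗ q) := by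
    rw [range_le_ker_iff, sub_comp, comp_assoc, hq]
    simp
  let T := (range (lcomp R J g)).liftQ _ hP ∘ₗ
    (hexact'.linearEquivOfSurjective hsurj).symm.toLinearMap
  have hT : T ∘ₗ lcomp R J f = LinearMap.id - lcomp R J g ∘ₗ q := by
    ext β : 1
    simp [T]
  refine ⟨T, hT, (cancel_right hsurj).1 ?_⟩
  rw [comp_assoc, hT, comp_sub, ← comp_assoc, hexact'.linearMap_comp_eq_zero]
  simp

end DualSection

section ComplexDuals

variable {R : Type} [CommRing R] {J : Type} [AddCommGroup J] [Module R J]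

lemma lcomp_comp_lcomp {M N P : Type} [AddCommGroup M] [AddCommGroup N] [AddCommGroup P]
    [Module R M] [Module R N] [Module R P] (f : M →ₗ[R] N) (g : N →ₗ[R] P) :
    lcomp R J f ∘ₗ lcomp R J g = lcomp R J (g ∘ₗ f) := rfl

def DCxHom.comp {A B C : DCx R} (g : DCxHom B C) (f : DCxHom A B) : DCxHom A C where
  f n := g.f n ∘ₗ f.f n
  comm n := by rw [← comp_assoc, g.comm, comp_assoc, f.comm, comp_assoc]

variable (J)

def CxHom.transpose {A : Cx R} {E : DCx R} (h : CxHom A (E.dual J)) : DCxHom E (A.dual J) where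
  f n := (h.f n).flip
  comm n := LinearMap.ext fun e => LinearMap.ext fun a =>
    (LinearMap.congr_fun (LinearMap.congr_fun (h.comm n) a) e).symm

def DCxHom.transpose {E : DCx R} {B : Cx R} (k : DCxHom E (B.dual J)) : CxHom B (E.dual J) where
  f n := (k.f n).flip
  comm n := LinearMap.ext fun b => LinearMap.ext fun e =>
    (LinearMap.congr_fun (LinearMap.congr_fun (k.comm n) e) b).symm

variable {J}

lemma CxPure.exists_dual_section (hJ : Module.Injective R J) {A B C : Cx R} {u : CxHom A B}
    {v : CxHom B C} (hses : CxSES u v) (hpure : CxPure J u v) :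
    ∃ T : DCxHom (A.dual J) (B.dual J), ∀ n, (u.dual J).f n ∘ₗ T.f n = LinearMap.id := by
  obtain ⟨r, hr, hrd⟩ : ∃ r : ∀ n, (B.X n →ₗ[R] J) →ₗ[R] (C.X n →ₗ[R] J),
      (∀ n, r n ∘ₗ lcomp R J (v.f n) = LinearMap.id) ∧
      ∀ n, lcomp R J (C.d n) ∘ₗ r (n + 1) = r n ∘ₗ lcomp R J (B.d n) :=
    let ⟨r, hr⟩ := hpure; ⟨r.f, hr, r.comm⟩
  choose T hTP hTu using fun n => (hses n).exists_dual_section hJ (r n) (hr n)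
  refine ⟨⟨T, fun n => ?_⟩, hTu⟩
  show lcomp R J (B.d n) ∘ₗ T (n + 1) = T n ∘ₗ lcomp R J (A.d n)
  -- precomposed with the epimorphism `u⁺`, both sides become `(1 - v⁺ r) ∘ d`
  rw [← cancel_right (lcomp_surjective_of_injective hJ (hses (n + 1)).1), comp_assoc, hTP,
    comp_assoc, lcomp_comp_lcomp, ← u.comm n, ← lcomp_comp_lcomp, ← comp_assoc, hTP,
    comp_sub, sub_comp, ← comp_assoc, lcomp_comp_lcomp, ← v.comm n, ← lcomp_comp_lcomp,
    comp_assoc, hrd n, comp_assoc]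
  simp

theorem DCx.dual_pureInjective (hJ : Module.Injective R J) (E : DCx R) :
    CxPureInjective J (E.dual J) := by
  intro A B C u v hses hpure h
  obtain ⟨T, hT⟩ := hpure.exists_dual_section hJ hses
  refine ⟨(T.comp (h.transpose J)).transpose J, fun n => ?_⟩
  refine LinearMap.ext fun a => LinearMap.ext fun e => ?_
  exact LinearMap.congr_fun (LinearMap.congr_fun (hT n) ((h.transpose J).f n e)) a

lemma exists_lamCx_dual_comp_eq_id (X : Cx R) :
    ∃ s : DCxHom (X.dual J) ((X.ddual J).dual J),
      ∀ n : ℤ, ((lamCx J X).dual J).f n ∘ₗ s.f n = LinearMap.id :=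
  ⟨⟨fun n => lamMap R J ((X.dual J).X n), fun _ => rfl⟩, fun _ => rfl⟩

end ComplexDuals

/-- the category of cochain complexes of `R`-modules has enough pure
injective objects: the canonical map `X → X⁺⁺` is a pure monomorphism (degreewise
injective with split dual) into the pure injective complex `X⁺⁺`. -/
theorem stmt17 (R : Type) [CommRing R] (J : Type) [AddCommGroup J] [Module R J]
    (hJ : IsInjectiveCogenerator R J) (X : Cx R) :
    (∀ n : ℤ, Function.Injective ((lamCx J X).f n)) ∧
    (∃ s : DCxHom (X.dual J) ((X.ddual J).dual J),
      ∀ n : ℤ, (((lamCx J X).dual J).f n).comp (s.f n) = LinearMap.id) ∧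
    CxPureInjective J (X.ddual J) :=
  ⟨fun n => lamMap_injective hJ (X.X n), exists_lamCx_dual_comp_eq_id X,
    (X.dual J).dual_pureInjective hJ.1⟩
end
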